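/- Suppose hypothesis (H1) holds. If there exists an extended sense L^∞ (global) minimizer for (P_e) which is not isolated, then there is no infimum gap: the infimum of J_e over all feasible extended sense processes equals the infimum of J over all feasible strict sense processes. -/

import Mathlib

open Filter MeasureTheory Set Topology
open scoped Topology RealInnerProductSpace NNReal

noncomputable section

/-- `ℝ^k` with the Euclidean norm. -/
abbrev En (k : ℕ) : Type := EuclideanSpace ℝ (Fin k)

/-- The limiting normal cone of a set `D` at a point `z`, defined with respect to a
pairing `pair` (in our applications, the Euclidean inner product of the ambient space):
`N_D(z) = {p | ∃ zᵢ →_D z, pᵢ → p, limsup_{z' →_D zᵢ} pᵢ⬝(z'-zᵢ)/|z'-zᵢ| ≤ 0 for each i}`. -/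
def limNC {E : Type*} [AddCommGroup E] [TopologicalSpace E]
    (pair : E → E → ℝ) (D : Set E) (z : E) : Set E :=
  {p | ∃ zs ps : ℕ → E, (∀ i, zs i ∈ D) ∧
    Tendsto zs atTop (𝓝 z) ∧ Tendsto ps atTop (𝓝 p) ∧
    ∀ i, Filter.limsup
      (fun z' => pair (ps i) (z' - zs i) / Real.sqrt (pair (z' - zs i) (z' - zs i)))
      (𝓝[D \ {zs i}] (zs i)) ≤ 0}

/-- Euclidean pairing on `ℝ × ℝⁿ × ℝ × ℝⁿ`. -/
def pair4 {n : ℕ} (a b : ℝ × En n × ℝ × En n) : ℝ :=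
  a.1 * b.1 + ⟪a.2.1, b.2.1⟫ + a.2.2.1 * b.2.2.1 + ⟪a.2.2.2, b.2.2.2⟫

/-- Euclidean pairing on `ℝ × ℝⁿ × ℝ × ℝⁿ × ℝ`. -/
def pair5 {n : ℕ} (a b : ℝ × En n × ℝ × En n × ℝ) : ℝ :=
  a.1 * b.1 + ⟪a.2.1, b.2.1⟫ + a.2.2.1 * b.2.2.1 + ⟪a.2.2.2.1, b.2.2.2.1⟫ +
    a.2.2.2.2 * b.2.2.2.2

/-- `C` is a closed convex cone. -/
def IsClosedConvexCone {k : ℕ} (C : Set (En k)) : Prop :=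
  IsClosed C ∧ Convex ℝ C ∧ ∀ c : ℝ, 0 ≤ c → ∀ w ∈ C, c • w ∈ C

/-- Hypothesis (H1)(i): the vector fields `f, g₁, …, g_m` are `C¹` and have
sublinear growth `|f(t,x)| + Σ_j |g_j(t,x)| ≤ A|x| + B`. -/
def HypH1i {n m : ℕ} (f : ℝ × En n → En n) (g : Fin m → ℝ × En n → En n) : Prop :=
  ContDiff ℝ 1 f ∧ (∀ j, ContDiff ℝ 1 (g j)) ∧
  ∃ A B : ℝ, 0 < A ∧ 0 < B ∧
    ∀ (t : ℝ) (x : En n), ‖f (t, x)‖ + ∑ j, ‖g j (t, x)‖ ≤ A * ‖x‖ + B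

/-- Hypothesis (H1): (H1)(i) together with: `h` is `C¹` and nondecreasing in the
total-variation variable `v`. -/
def HypH1 {n m : ℕ} (f : ℝ × En n → En n) (g : Fin m → ℝ × En n → En n)
    (h : ℝ × En n × ℝ × En n × ℝ → ℝ) : Prop :=
  HypH1i f g ∧ ContDiff ℝ 1 h ∧
  ∀ (t1 : ℝ) (x1 : En n) (t2 : ℝ) (x2 : En n),
    Monotone (fun v => h (t1, x1, t2, x2, v))

/-- A strict sense process `(t₁,t₂,x,v,u)`: `x,v,u` are `W^{1,1}` on `[t₁,t₂]`
(encoded by integrable a.e. derivatives `x',v',u'` and the integral representation),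
`du/dt ∈ 𝒞` a.e., `dx/dt = f(t,x) + Σ_j g_j(t,x) du^j/dt` and `dv/dt = |du/dt|` a.e.
The functions are extended to all of `ℝ`, constant outside `[t₁,t₂]`. -/
structure StrictProcess (n m : ℕ) (C : Set (En m))
    (f : ℝ × En n → En n) (g : Fin m → ℝ × En n → En n) where
  t1 : ℝ
  t2 : ℝ
  x : ℝ → En n
  v : ℝ → ℝ
  u : ℝ → En m
  x' : ℝ → En n
  v' : ℝ → ℝ
  u' : ℝ → En m
  ht : t1 < t2
  hx'int : IntervalIntegrable x' volume t1 t2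
  hv'int : IntervalIntegrable v' volume t1 t2
  hu'int : IntervalIntegrable u' volume t1 t2
  hxac : ∀ t ∈ Icc t1 t2, x t = x t1 + ∫ τ in t1..t, x' τ
  hvac : ∀ t ∈ Icc t1 t2, v t = v t1 + ∫ τ in t1..t, v' τ
  huac : ∀ t ∈ Icc t1 t2, u t = u t1 + ∫ τ in t1..t, u' τ
  hcone : ∀ᵐ t ∂(volume : Measure ℝ), t ∈ Icc t1 t2 → u' t ∈ C
  hode : ∀ᵐ t ∂(volume : Measure ℝ), t ∈ Icc t1 t2 →
    x' t = f (t, x t) + ∑ j, u' t j • g j (t, x t)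
  hvar : ∀ᵐ t ∂(volume : Measure ℝ), t ∈ Icc t1 t2 → v' t = ‖u' t‖
  hxconstl : ∀ t ≤ t1, x t = x t1
  hxconstr : ∀ t, t2 ≤ t → x t = x t2
  hvconstl : ∀ t ≤ t1, v t = v t1
  hvconstr : ∀ t, t2 ≤ t → v t = v t2

/-- An extended sense process `(S,y⁰,y,ν,φ⁰,φ)`: Lipschitz functions on `[0,S]`
satisfying a.e. `dy⁰/ds = dφ⁰/ds`, `dy/ds = f(y⁰,y)dφ⁰/ds + Σ_j g_j(y⁰,y)dφ^j/ds`,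
`dν/ds = |dφ/ds|` and `(dφ⁰/ds, dφ/ds) ∈ 𝐂 = {(w⁰,w) ∈ ℝ₊ × 𝒞 : w⁰ + |w| = 1}`.
The state functions `y, ν` are extended to all of `ℝ`, constant outside `[0,S]`. -/
structure ExtProcess (n m : ℕ) (C : Set (En m))
    (f : ℝ × En n → En n) (g : Fin m → ℝ × En n → En n) where
  S : ℝ
  hS : 0 ≤ S
  y0 : ℝ → ℝ
  y : ℝ → En n
  nu : ℝ → ℝ
  phi0 : ℝ → ℝ
  phi : ℝ → En m
  y0' : ℝ → ℝ
  y' : ℝ → En n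
  nu' : ℝ → ℝ
  phi0' : ℝ → ℝ
  phi' : ℝ → En m
  lip : ∃ L : ℝ≥0, LipschitzOnWith L
    (fun s => (y0 s, y s, nu s, phi0 s, phi s)) (Icc 0 S)
  hy0int : IntervalIntegrable y0' volume 0 S
  hyint : IntervalIntegrable y' volume 0 S
  hnuint : IntervalIntegrable nu' volume 0 S
  hphi0int : IntervalIntegrable phi0' volume 0 S
  hphiint : IntervalIntegrable phi' volume 0 S
  hy0ac : ∀ s ∈ Icc 0 S, y0 s = y0 0 + ∫ r in (0:ℝ)..s, y0' r
  hyac : ∀ s ∈ Icc 0 S, y s = y 0 + ∫ r in (0:ℝ)..s, y' r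
  hnuac : ∀ s ∈ Icc 0 S, nu s = nu 0 + ∫ r in (0:ℝ)..s, nu' r
  hphi0ac : ∀ s ∈ Icc 0 S, phi0 s = phi0 0 + ∫ r in (0:ℝ)..s, phi0' r
  hphiac : ∀ s ∈ Icc 0 S, phi s = phi 0 + ∫ r in (0:ℝ)..s, phi' r
  heqy0 : ∀ᵐ s ∂(volume : Measure ℝ), s ∈ Icc 0 S → y0' s = phi0' s
  heqy : ∀ᵐ s ∂(volume : Measure ℝ), s ∈ Icc 0 S →
    y' s = phi0' s • f (y0 s, y s) + ∑ j, phi' s j • g j (y0 s, y s)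
  heqnu : ∀ᵐ s ∂(volume : Measure ℝ), s ∈ Icc 0 S → nu' s = ‖phi' s‖
  hcone : ∀ᵐ s ∂(volume : Measure ℝ), s ∈ Icc 0 S →
    0 ≤ phi0' s ∧ phi' s ∈ C ∧ phi0' s + ‖phi' s‖ = 1
  hyconstl : ∀ s ≤ (0:ℝ), y s = y 0
  hyconstr : ∀ s, S ≤ s → y s = y S
  hnuconstl : ∀ s ≤ (0:ℝ), nu s = nu 0
  hnuconstr : ∀ s, S ≤ s → nu s = nu S

variable {n m : ℕ} {C : Set (En m)}
  {f : ℝ × En n → En n} {g : Fin m → ℝ × En n → En n}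

/-- Feasibility of a strict sense process: `v(t₁)=0`, `v(t₂) ≤ K`,
`(t₁,x(t₁),t₂,x(t₂)) ∈ 𝒯`. -/
def StrictFeasible (K : EReal) (T : Set (ℝ × En n × ℝ × En n))
    (P : StrictProcess n m C f g) : Prop :=
  P.v P.t1 = 0 ∧ (P.v P.t2 : EReal) ≤ K ∧ (P.t1, P.x P.t1, P.t2, P.x P.t2) ∈ T

/-- Feasibility of an extended sense process: `ν(0)=0`, `ν(S) ≤ K`,
`(y⁰(0),y(0),y⁰(S),y(S)) ∈ 𝒯`. -/
def ExtFeasible (K : EReal) (T : Set (ℝ × En n × ℝ × En n))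
    (Q : ExtProcess n m C f g) : Prop :=
  Q.nu 0 = 0 ∧ (Q.nu Q.S : EReal) ≤ K ∧ (Q.y0 0, Q.y 0, Q.y0 Q.S, Q.y Q.S) ∈ T

/-- The cost of a strict sense process. -/
def Jstrict (h : ℝ × En n × ℝ × En n × ℝ → ℝ) (P : StrictProcess n m C f g) : ℝ :=
  h (P.t1, P.x P.t1, P.t2, P.x P.t2, P.v P.t2)

/-- The endpoint data `(y⁰(0),y(0),y⁰(S),y(S),ν(S))` of an extended process. -/
def endptExt (Q : ExtProcess n m C f g) : ℝ × En n × ℝ × En n × ℝ :=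
  (Q.y0 0, Q.y 0, Q.y0 Q.S, Q.y Q.S, Q.nu Q.S)

/-- The cost of an extended sense process. -/
def Jext (h : ℝ × En n × ℝ × En n × ℝ → ℝ) (Q : ExtProcess n m C f g) : ℝ :=
  h (endptExt Q)

/-- The distance `d_∞((a,b,x,v),(a',b',x',v')) = |a-a'| + |b-b'| + ‖(x,v)-(x',v')‖_{L^∞(ℝ)}`. -/
def dInfty {n : ℕ} (a b : ℝ) (x : ℝ → En n) (v : ℝ → ℝ)
    (a' b' : ℝ) (x' : ℝ → En n) (v' : ℝ → ℝ) : ℝ :=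
  |a - a'| + |b - b'| + ⨆ t : ℝ, Real.sqrt (‖x t - x' t‖ ^ 2 + (v t - v' t) ^ 2)

/-- The distance `d_∞((y⁰(0),y⁰(S),y,ν), (ȳ⁰(0),ȳ⁰(S̄),ȳ,ν̄))` between the trajectories
of two extended sense processes. -/
def dExt (Q Qb : ExtProcess n m C f g) : ℝ :=
  dInfty (Q.y0 0) (Q.y0 Q.S) Q.y Q.nu (Qb.y0 0) (Qb.y0 Qb.S) Qb.y Qb.nu

/-- The time-reparameterization map `σ(t) = ∫_{t₁}^t (1 + |du/dτ|) dτ` of a strict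
sense process. -/
def sigmaMap (P : StrictProcess n m C f g) : ℝ → ℝ :=
  fun t => ∫ τ in P.t1..t, (1 + ‖P.u' τ‖)

/-- `Q = ℐ(P)`: the extended sense process `Q` is the embedding of the strict sense
process `P`, i.e. `S = σ(t₂)` and `(y⁰,y,ν,φ⁰,φ) ∘ σ = (id,x,v,id,u)` on `[t₁,t₂]`. -/
def IsEmbedding (P : StrictProcess n m C f g) (Q : ExtProcess n m C f g) : Prop :=
  Q.S = sigmaMap P P.t2 ∧
  ∀ t ∈ Icc P.t1 P.t2,
    Q.y0 (sigmaMap P t) = t ∧ Q.y (sigmaMap P t) = P.x t ∧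
    Q.nu (sigmaMap P t) = P.v t ∧ Q.phi0 (sigmaMap P t) = t ∧
    Q.phi (sigmaMap P t) = P.u t

/-- The extension `𝒯 × [0,K]` of the target set, as a subset of `ℝ × ℝⁿ × ℝ × ℝⁿ × ℝ`. -/
def targetExt (K : EReal) (T : Set (ℝ × En n × ℝ × En n)) :
    Set (ℝ × En n × ℝ × En n × ℝ) :=
  {z | (z.1, z.2.1, z.2.2.1, z.2.2.2.1) ∈ T ∧ 0 ≤ z.2.2.2.2 ∧ (z.2.2.2.2 : EReal) ≤ K}

/-- `(p₀,p,π,λ)` is a multiplier set for the feasible extended sense process `Q`: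
`(p₀,p) ∈ W^{1,1}([0,S];ℝ^{1+n})`, `π ≤ 0 ≤ λ`, `(p₀,p,λ) ≠ (0,0,0)`, and the adjoint
equations, the maximum condition (with zero maximized Hamiltonian) and the transversality
condition `(p₀(0),p(0),-p₀(S),-p(S),-π) ∈ λ∇h(ē) + N_{𝒯×[0,K]}(ē)` hold. -/
def IsMultiplier (K : EReal) (T : Set (ℝ × En n × ℝ × En n))
    (h : ℝ × En n × ℝ × En n × ℝ → ℝ) (Q : ExtProcess n m C f g)
    (p0 : ℝ → ℝ) (p : ℝ → En n) (pi lam : ℝ) : Prop :=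
  pi ≤ 0 ∧ 0 ≤ lam ∧
  ¬ ((∀ s ∈ Icc (0:ℝ) Q.S, p0 s = 0 ∧ p s = 0) ∧ lam = 0) ∧
  ∃ (p0' : ℝ → ℝ) (p' : ℝ → En n),
    IntervalIntegrable p0' volume 0 Q.S ∧ IntervalIntegrable p' volume 0 Q.S ∧
    (∀ s ∈ Icc (0:ℝ) Q.S, p0 s = p0 0 + ∫ r in (0:ℝ)..s, p0' r) ∧
    (∀ s ∈ Icc (0:ℝ) Q.S, p s = p 0 + ∫ r in (0:ℝ)..s, p' r) ∧
    -- adjoint equation for p₀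
    (∀ᵐ s ∂(volume : Measure ℝ), s ∈ Icc (0:ℝ) Q.S →
      p0' s = -(⟪p s, fderiv ℝ f (Q.y0 s, Q.y s) (1, 0)⟫ * Q.phi0' s
        + ∑ j, ⟪p s, fderiv ℝ (g j) (Q.y0 s, Q.y s) (1, 0)⟫ * Q.phi' s j)) ∧
    -- adjoint equation for p
    (∀ᵐ s ∂(volume : Measure ℝ), s ∈ Icc (0:ℝ) Q.S → ∀ w : En n,
      ⟪p' s, w⟫ = -(⟪p s, fderiv ℝ f (Q.y0 s, Q.y s) (0, w)⟫ * Q.phi0' s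
        + ∑ j, ⟪p s, fderiv ℝ (g j) (Q.y0 s, Q.y s) (0, w)⟫ * Q.phi' s j)) ∧
    -- maximum condition: the Hamiltonian attains its maximum 0 along the process
    (∀ᵐ s ∂(volume : Measure ℝ), s ∈ Icc (0:ℝ) Q.S →
      (⟪p s, Q.phi0' s • f (Q.y0 s, Q.y s) + ∑ j, Q.phi' s j • g j (Q.y0 s, Q.y s)⟫
        + p0 s * Q.phi0' s + pi * ‖Q.phi' s‖ = 0) ∧
      (∀ (w0 : ℝ) (w : En m), 0 ≤ w0 → w ∈ C → w0 + ‖w‖ = 1 →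
        ⟪p s, w0 • f (Q.y0 s, Q.y s) + ∑ j, w j • g j (Q.y0 s, Q.y s)⟫
          + p0 s * w0 + pi * ‖w‖ ≤ 0)) ∧
    -- transversality condition
    (∃ q ∈ limNC pair5 (targetExt K T) (endptExt Q),
      ∀ d : ℝ × En n × ℝ × En n × ℝ,
        pair5 ((p0 0, p 0, -p0 Q.S, -p Q.S, -pi) - q) d
          = lam * fderiv ℝ h (endptExt Q) d)

/-- `Q` is an extended sense extremal: it admits a multiplier set. -/
def IsExtremal (K : EReal) (T : Set (ℝ × En n × ℝ × En n))
    (h : ℝ × En n × ℝ × En n × ℝ → ℝ) (Q : ExtProcess n m C f g) : Prop :=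
  ∃ p0 p pi lam, IsMultiplier K T h Q p0 p pi lam

/-- `Q` is a normal extended sense extremal: it is an extremal and every multiplier
set for it has cost multiplier `λ > 0`. -/
def NormalExtremal (K : EReal) (T : Set (ℝ × En n × ℝ × En n))
    (h : ℝ × En n × ℝ × En n × ℝ → ℝ) (Q : ExtProcess n m C f g) : Prop :=
  IsExtremal K T h Q ∧
  ∀ p0 p pi lam, IsMultiplier K T h Q p0 p pi lam → 0 < lam

/-- Extended sense `L^∞` (global) minimizer. -/
def ExtGlobalMin (K : EReal) (T : Set (ℝ × En n × ℝ × En n))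
    (h : ℝ × En n × ℝ × En n × ℝ → ℝ) (Qb : ExtProcess n m C f g) : Prop :=
  ExtFeasible K T Qb ∧ ∀ Q : ExtProcess n m C f g, ExtFeasible K T Q →
    Jext h Qb ≤ Jext h Q

/-- Extended sense `L^∞` local minimizer. -/
def ExtLocalMin (K : EReal) (T : Set (ℝ × En n × ℝ × En n))
    (h : ℝ × En n × ℝ × En n × ℝ → ℝ) (Qb : ExtProcess n m C f g) : Prop :=
  ExtFeasible K T Qb ∧ ∃ δ > (0:ℝ), ∀ Q : ExtProcess n m C f g, ExtFeasible K T Q →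
    dExt Q Qb ≤ δ → Jext h Qb ≤ Jext h Q

/-- Strict sense `L^∞` local minimizer. -/
def StrictLocalMin (K : EReal) (T : Set (ℝ × En n × ℝ × En n))
    (h : ℝ × En n × ℝ × En n × ℝ → ℝ) (Pb : StrictProcess n m C f g) : Prop :=
  StrictFeasible K T Pb ∧ ∃ δ > (0:ℝ), ∀ P : StrictProcess n m C f g,
    StrictFeasible K T P →
    dInfty P.t1 P.t2 P.x P.v Pb.t1 Pb.t2 Pb.x Pb.v ≤ δ → Jstrict h Pb ≤ Jstrict h P

/-- A feasible extended sense process is isolated: for some `δ > 0` no feasible embedded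
strict sense process lies within distance `δ` of it. -/
def IsolatedProcess (K : EReal) (T : Set (ℝ × En n × ℝ × En n))
    (Qb : ExtProcess n m C f g) : Prop :=
  ∃ δ > (0:ℝ), ¬ ∃ (P : StrictProcess n m C f g) (Q : ExtProcess n m C f g),
    IsEmbedding P Q ∧ ExtFeasible K T Q ∧ dExt Q Qb < δ

variable (C) (f) (g) in
/-- No infimum gap: the infimum of the extended cost over feasible extended sense
processes coincides with the infimum of the cost over feasible strict sense processes. -/
def NoInfGap (K : EReal) (T : Set (ℝ × En n × ℝ × En n))
    (h : ℝ × En n × ℝ × En n × ℝ → ℝ) : Prop :=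
  sInf {c : ℝ | ∃ Q : ExtProcess n m C f g, ExtFeasible K T Q ∧ Jext h Q = c} =
  sInf {c : ℝ | ∃ P : StrictProcess n m C f g, StrictFeasible K T P ∧ Jstrict h P = c}

/-- No local infimum gap at `Qb`: for some `δ > 0` the cost of `Qb` equals the infimum
of the cost over feasible strict sense processes whose embeddings lie within distance
`δ` of `Qb`. -/
def NoLocalInfGap (K : EReal) (T : Set (ℝ × En n × ℝ × En n))
    (h : ℝ × En n × ℝ × En n × ℝ → ℝ) (Qb : ExtProcess n m C f g) : Prop :=
  ∃ δ > (0:ℝ), Jext h Qb =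
    sInf {c : ℝ | ∃ (P : StrictProcess n m C f g) (Q : ExtProcess n m C f g),
      IsEmbedding P Q ∧ StrictFeasible K T P ∧ dExt Q Qb < δ ∧ Jstrict h P = c}

variable (C) in
/-- Quick 1-controllability of the control system w.r.t. the target `𝒯` at a point
`(t₁,x₁,t₂,x₂) ∈ 𝒯`: for every limiting normal `ζ` with `ζ_{x₂} ≠ 0`,
`inf_{w ∈ 𝒞} ζ_{x₂} ⬝ Σ_j g_j(t₂,x₂) wʲ < 0`. -/
def QuickControllable (g : Fin m → ℝ × En n → En n)
    (T : Set (ℝ × En n × ℝ × En n)) (e : ℝ × En n × ℝ × En n) : Prop :=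
  ∀ ζ ∈ limNC pair4 T e, ζ.2.2.2 ≠ (0 : En n) →
    ∃ w ∈ C, ⟪ζ.2.2.2, ∑ j, w j • g j (e.2.2.1, e.2.2.2)⟫ < 0

/-- Drift controllability of the control system w.r.t. the target `𝒯` at a point
`(t₁,x₁,t₂,x₂) ∈ 𝒯`: for every limiting normal `ζ` with `ζ_{x₂} ≠ 0`,
`ζ_{x₂} ⬝ f(t₂,x₂) < 0`. -/
def DriftControllable (f : ℝ × En n → En n)
    (T : Set (ℝ × En n × ℝ × En n)) (e : ℝ × En n × ℝ × En n) : Prop :=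
  ∀ ζ ∈ limNC pair4 T e, ζ.2.2.2 ≠ (0 : En n) →
    ⟪ζ.2.2.2, f (e.2.2.1, e.2.2.2)⟫ < 0


/-!
As `Q̄` is a global minimizer, the extended infimum is `J_e(Q̄)`. The strict infimum is at
least `J_e(Q̄)` because every feasible strict process embeds as a feasible extended process
with the same cost: along the time change `s = σ(t) = ∫_{t₁}^t (1 + |du/dτ|) dτ` the state,
the variation and the control become Lipschitz in `s`, with derivatives
`(dx/dt, dv/dt, du/dt) / (1 + |du/dt|)` satisfying the extended dynamics; the analytic input is
that `σ⁻¹` pushes Lebesgue measure forward to `(1 + |du/dt|) dt`. It is at most `J_e(Q̄)`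
because, `Q̄` not being isolated, there are feasible embedded strict processes whose endpoint
data, which `d_∞` controls, are arbitrarily close to those of `Q̄`, so by continuity of `h`
their costs approach `J_e(Q̄)`.
-/

section TimeChange

variable {ρ : ℝ → ℝ}

theorem sub_le_integral_of_one_le (hρ1 : ∀ t, 1 ≤ ρ t)
    (hρ : ∀ a b, IntervalIntegrable ρ volume a b) {a b : ℝ} (hab : a ≤ b) :
    b - a ≤ ∫ t in a..b, ρ t := by
  simpa using intervalIntegral.integral_mono_on hab intervalIntegrable_const (hρ a b)
    fun t _ => hρ1 t

theorem strictMono_primitive_of_one_le (hρ1 : ∀ t, 1 ≤ ρ t)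
    (hρ : ∀ a b, IntervalIntegrable ρ volume a b) (t₀ : ℝ) :
    StrictMono fun b => ∫ t in t₀..b, ρ t := fun a b hab => by
  have := sub_le_integral_of_one_le hρ1 hρ hab.le
  rw [← intervalIntegral.integral_interval_sub_left (hρ t₀ b) (hρ t₀ a)] at this
  linarith

theorem surjective_primitive_of_one_le (hρ1 : ∀ t, 1 ≤ ρ t)
    (hρ : ∀ a b, IntervalIntegrable ρ volume a b) (t₀ : ℝ) :
    Function.Surjective fun b => ∫ t in t₀..b, ρ t := by
  have hlow : ∀ b, t₀ ≤ b → b - t₀ ≤ ∫ t in t₀..b, ρ t :=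
    fun b hb => sub_le_integral_of_one_le hρ1 hρ hb
  have hup : ∀ b, b ≤ t₀ → ∫ t in t₀..b, ρ t ≤ b - t₀ := fun b hb => by
    have := sub_le_integral_of_one_le hρ1 hρ hb
    rw [intervalIntegral.integral_symm]
    linarith
  refine (intervalIntegral.continuous_primitive hρ t₀).surjective ?_ ?_
  · refine tendsto_atTop_mono' atTop ?_ (tendsto_atTop_add_const_right atTop (-t₀) tendsto_id)
    filter_upwards [eventually_ge_atTop t₀] with b hb
    simpa [sub_eq_add_neg] using hlow b hb
  · refine tendsto_atBot_mono' atBot ?_ (tendsto_atBot_add_const_right atBot (-t₀) tendsto_id)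
    filter_upwards [eventually_le_atBot t₀] with b hb
    simpa [sub_eq_add_neg] using hup b hb

variable (ρ) in
def primitiveOrderIso (t₀ : ℝ) (hρ1 : ∀ t, 1 ≤ ρ t)
    (hρ : ∀ a b, IntervalIntegrable ρ volume a b) : ℝ ≃o ℝ :=
  StrictMono.orderIsoOfSurjective _ (strictMono_primitive_of_one_le hρ1 hρ t₀)
    (surjective_primitive_of_one_le hρ1 hρ t₀)

variable {t₀ : ℝ} {hρ1 : ∀ t, 1 ≤ ρ t} {hρ : ∀ a b, IntervalIntegrable ρ volume a b}
  {E : Type*} [NormedAddCommGroup E] [NormedSpace ℝ E]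

local notation "σ" => primitiveOrderIso ρ t₀ hρ1 hρ

@[simp]
theorem primitiveOrderIso_apply (b : ℝ) : σ b = ∫ t in t₀..b, ρ t := rfl

@[simp]
theorem primitiveOrderIso_self : σ t₀ = 0 := by simp

theorem primitiveOrderIso_sub (a b : ℝ) : σ b - σ a = ∫ t in a..b, ρ t :=
  intervalIntegral.integral_interval_sub_left (hρ _ _) (hρ _ _)

theorem primitiveOrderIso_symm_mem_Icc_iff {a b s : ℝ} :
    (σ).symm s ∈ Icc a b ↔ s ∈ Icc (σ a) (σ b) := by
  simp only [mem_Icc, OrderIso.le_symm_apply, OrderIso.symm_apply_le]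

theorem lipschitzWith_primitiveOrderIso_symm : LipschitzWith 1 (σ).symm := by
  refine LipschitzWith.of_le_add fun s s' => ?_
  rcases le_total s s' with h | h
  · linarith [(σ).symm.monotone h, dist_nonneg (x := s) (y := s')]
  · have := sub_le_integral_of_one_le hρ1 hρ ((σ).symm.monotone h)
    rw [← primitiveOrderIso_sub (t₀ := t₀) (hρ1 := hρ1) (hρ := hρ), OrderIso.apply_symm_apply,
      OrderIso.apply_symm_apply] at this
    rw [Real.dist_eq, abs_of_nonneg (sub_nonneg.2 h)]
    linarith

theorem map_primitiveOrderIso_symm_volume :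
    volume.map (σ).symm = volume.withDensity fun t => ENNReal.ofReal (ρ t) := by
  have hpre : ∀ a b, (σ).symm ⁻¹' Ioc a b = Ioc (σ a) (σ b) := fun a b => by
    simp only [OrderIso.preimage_Ioc, OrderIso.symm_symm]
  refine Measure.ext_of_Ioc' _ _ (fun a b _ => ?_) (fun a b hab => ?_) <;>
    rw [Measure.map_apply (σ).symm.monotone.measurable measurableSet_Ioc, hpre, Real.volume_Ioc]
  · exact ENNReal.ofReal_ne_top
  · rw [withDensity_apply _ measurableSet_Ioc, primitiveOrderIso_sub,
      intervalIntegral.integral_of_le hab.le]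
    exact ofReal_integral_eq_lintegral_ofReal
      ((intervalIntegrable_iff_integrableOn_Ioc_of_le hab.le).1 (hρ a b))
      (Eventually.of_forall fun t => zero_le_one.trans (hρ1 t))

theorem ae_comp_primitiveOrderIso_symm {p : ℝ → Prop} (h : ∀ᵐ t, p t) :
    ∀ᵐ s, p ((σ).symm s) := by
  refine ae_of_ae_map (σ).symm.monotone.measurable.aemeasurable ?_
  rw [map_primitiveOrderIso_symm_volume]
  exact withDensity_absolutelyContinuous _ _ |>.ae_le h

theorem map_restrict_primitiveOrderIso_symm (a b : ℝ) :
    (volume.restrict (Icc (σ a) (σ b))).map (σ).symm =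
      (volume.restrict (Icc a b)).withDensity fun t => ENNReal.ofReal (ρ t) := by
  have hpre : (σ).symm ⁻¹' Icc a b = Icc (σ a) (σ b) := by
    simp only [OrderIso.preimage_Icc, OrderIso.symm_symm]
  rw [← hpre, ← Measure.restrict_map (σ).symm.monotone.measurable measurableSet_Icc,
    map_primitiveOrderIso_symm_volume, restrict_withDensity measurableSet_Icc]

theorem integral_comp_primitiveOrderIso_symm {G : ℝ → E} {a b : ℝ} (hab : a ≤ b)
    (hG : IntervalIntegrable G volume a b) :
    IntervalIntegrable (fun s => (ρ ((σ).symm s))⁻¹ • G ((σ).symm s)) volume (σ a) (σ b) ∧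
      ∫ s in σ a..σ b, (ρ ((σ).symm s))⁻¹ • G ((σ).symm s) = ∫ t in a..b, G t := by
  have hσab : σ a ≤ σ b := (σ).monotone hab
  rw [intervalIntegrable_iff_integrableOn_Icc_of_le hab] at hG
  have hρm := ((intervalIntegrable_iff_integrableOn_Icc_of_le hab).1 (hρ a b)).aemeasurable
  have hμ := map_restrict_primitiveOrderIso_symm (t₀ := t₀) (hρ1 := hρ1) (hρ := hρ) a b
  have hH : AEStronglyMeasurable (fun t => (ρ t)⁻¹ • G t)
      ((volume.restrict (Icc (σ a) (σ b))).map (σ).symm) := by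
    rw [hμ]
    exact (hρm.inv.aestronglyMeasurable.smul hG.aestronglyMeasurable).mono_ac
      (withDensity_absolutelyContinuous _ _)
  have hcancel : ∀ t, (ρ t).toNNReal • ((ρ t)⁻¹ • G t) = G t := fun t => by
    rw [NNReal.smul_def, Real.coe_toNNReal _ (zero_le_one.trans (hρ1 t)),
      smul_inv_smul₀ (one_pos.trans_le (hρ1 t)).ne']
  constructor
  · rw [intervalIntegrable_iff_integrableOn_Icc_of_le hσab]
    refine (integrable_map_measure hH (σ).symm.monotone.measurable.aemeasurable).1 ?_
    rw [hμ]
    exact (integrable_withDensity_iff_integrable_smul₀ hρm.real_toNNReal).2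
      (by simpa only [hcancel] using hG.integrable)
  · rw [intervalIntegral.integral_of_le hσab, intervalIntegral.integral_of_le hab,
      ← integral_Icc_eq_integral_Ioc, ← integral_Icc_eq_integral_Ioc,
      ← integral_map (σ).symm.monotone.measurable.aemeasurable hH, hμ]
    exact (integral_withDensity_eq_integral_smul₀ hρm.real_toNNReal _).trans
      (by simp only [hcancel])

theorem intervalIntegrable_comp_primitiveOrderIso_symm {w' : ℝ → E} {b : ℝ} (hb : t₀ ≤ b)
    (hw' : IntervalIntegrable w' volume t₀ b) :
    IntervalIntegrable (fun r => (ρ ((σ).symm r))⁻¹ • w' ((σ).symm r)) volume 0 (σ b) := by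
  have := (integral_comp_primitiveOrderIso_symm (t₀ := t₀) (hρ1 := hρ1) (hρ := hρ) hb hw').1
  rwa [primitiveOrderIso_self] at this

theorem comp_primitiveOrderIso_symm_eq_add_integral {w w' : ℝ → E} {b : ℝ}
    (hw' : IntervalIntegrable w' volume t₀ b)
    (hw : ∀ t ∈ Icc t₀ b, w t = w t₀ + ∫ q in t₀..t, w' q) {s : ℝ} (hs : s ∈ Icc 0 (σ b)) :
    w ((σ).symm s) = w t₀ + ∫ r in 0..s, (ρ ((σ).symm r))⁻¹ • w' ((σ).symm r) := by
  obtain ⟨t, rfl⟩ := (σ).surjective s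
  have hσt₀ : σ t₀ = 0 := primitiveOrderIso_self
  have ht : t ∈ Icc t₀ b := by simpa only [mem_Icc, ← hσt₀, OrderIso.le_iff_le] using hs
  rw [OrderIso.symm_apply_apply, ← hσt₀, (integral_comp_primitiveOrderIso_symm ht.1
    (hw'.mono_set (uIcc_subset_uIcc_left (by rwa [uIcc_of_le (ht.1.trans ht.2)])))).2]
  exact hw t ht

end TimeChange

theorem lipschitzOnWith_of_eq_add_integral {E : Type*} [NormedAddCommGroup E] [NormedSpace ℝ E]
    {w G : ℝ → E} {a b : ℝ} {L : ℝ≥0}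
    (hG : IntervalIntegrable G volume a b) (hGL : ∀ᵐ s, s ∈ Icc a b → ‖G s‖ ≤ L)
    (hw : ∀ s ∈ Icc a b, w s = w a + ∫ r in a..s, G r) : LipschitzOnWith L w (Icc a b) := by
  refine LipschitzOnWith.of_dist_le_mul fun x hx y hy => ?_
  have hsub : ∀ {c}, c ∈ Icc a b → uIcc a c ⊆ uIcc a b := fun hc =>
    uIcc_subset_uIcc_left (by rwa [uIcc_of_le (hc.1.trans hc.2)])
  rw [dist_eq_norm, hw x hx, hw y hy, add_sub_add_left_eq_sub,
    intervalIntegral.integral_interval_sub_left (hG.mono_set (hsub hx)) (hG.mono_set (hsub hy)),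
    Real.dist_eq]
  refine intervalIntegral.norm_integral_le_of_norm_le_const_ae ?_
  filter_upwards [hGL] with s hs hs'
  exact hs (uIcc_subset_Icc hy hx (uIoc_subset_uIcc hs'))

theorem norm_smul_add_sum_smul_le {E : Type*} [NormedAddCommGroup E] [NormedSpace ℝ E] {k : ℕ}
    (a : ℝ) (w : En k) (F : E) (G : Fin k → E) :
    ‖a • F + ∑ j, w j • G j‖ ≤ (|a| + ‖w‖) * (‖F‖ + ∑ j, ‖G j‖) := by
  have hsum : ‖∑ j, w j • G j‖ ≤ ‖w‖ * ∑ j, ‖G j‖ := by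
    rw [Finset.mul_sum]
    refine (norm_sum_le _ _).trans (Finset.sum_le_sum fun j _ => ?_)
    rw [norm_smul]
    exact mul_le_mul_of_nonneg_right (PiLp.norm_apply_le w j) (norm_nonneg _)
  have hF : ‖a • F‖ = |a| * ‖F‖ := by rw [norm_smul, Real.norm_eq_abs]
  have := Finset.sum_nonneg fun j (_ : j ∈ Finset.univ) => norm_nonneg (G j)
  nlinarith [norm_add_le (a • F) (∑ j, w j • G j), abs_nonneg a, norm_nonneg w, norm_nonneg F]

namespace StrictProcess

variable (P : StrictProcess n m C f g)

/-- `dσ/dt = 1 + |du/dt|`, with `du/dt` cut off outside `[t₁, t₂]` so that it is locally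
integrable on all of `ℝ`. -/
def sigmaDeriv (t : ℝ) : ℝ := 1 + ‖(Icc P.t1 P.t2).indicator P.u' t‖

theorem one_le_sigmaDeriv (t : ℝ) : 1 ≤ P.sigmaDeriv t :=
  le_add_of_nonneg_right (norm_nonneg _)

theorem sigmaDeriv_of_mem {t : ℝ} (ht : t ∈ Icc P.t1 P.t2) : P.sigmaDeriv t = 1 + ‖P.u' t‖ := by
  rw [sigmaDeriv, indicator_of_mem ht]

theorem intervalIntegrable_sigmaDeriv (a b : ℝ) : IntervalIntegrable P.sigmaDeriv volume a b := by
  have hu := (intervalIntegrable_iff_integrableOn_Icc_of_le P.ht.le).1 P.hu'int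
  exact intervalIntegrable_const.add
    (hu.integrable_indicator measurableSet_Icc).norm.intervalIntegrable

def timeChange : ℝ ≃o ℝ :=
  primitiveOrderIso P.sigmaDeriv P.t1 P.one_le_sigmaDeriv P.intervalIntegrable_sigmaDeriv

local notation "τ" => P.timeChange.symm

/-- `dt/ds` along `t = σ⁻¹(s)`. -/
def rate (s : ℝ) : ℝ := (P.sigmaDeriv (τ s))⁻¹

theorem timeChange_eq_sigmaMap {t : ℝ} (ht : t ∈ Icc P.t1 P.t2) :
    P.timeChange t = sigmaMap P t := by
  refine intervalIntegral.integral_congr fun q hq => ?_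
  rw [uIcc_of_le ht.1] at hq
  exact P.sigmaDeriv_of_mem ⟨hq.1, hq.2.trans ht.2⟩

@[simp]
theorem timeChange_t1 : P.timeChange P.t1 = 0 := primitiveOrderIso_self

theorem timeChange_symm_zero : τ 0 = P.t1 := by
  rw [← P.timeChange_t1, OrderIso.symm_apply_apply]

theorem timeChange_symm_mem_Icc_iff {s : ℝ} :
    τ s ∈ Icc P.t1 P.t2 ↔ s ∈ Icc 0 (P.timeChange P.t2) := by
  rw [← P.timeChange_t1]
  exact primitiveOrderIso_symm_mem_Icc_iff

theorem ae_comp_timeChange_symm {p : ℝ → Prop} (h : ∀ᵐ t, t ∈ Icc P.t1 P.t2 → p t) :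
    ∀ᵐ s, s ∈ Icc 0 (P.timeChange P.t2) → p (τ s) := by
  filter_upwards [ae_comp_primitiveOrderIso_symm h] with s hs hsI
  exact hs (P.timeChange_symm_mem_Icc_iff.2 hsI)

theorem rate_nonneg (s : ℝ) : 0 ≤ P.rate s :=
  inv_nonneg.2 (zero_le_one.trans (P.one_le_sigmaDeriv _))

theorem rate_add_norm_rate_smul {s : ℝ} (hs : s ∈ Icc 0 (P.timeChange P.t2)) :
    P.rate s + ‖P.rate s • P.u' (τ s)‖ = 1 := by
  have hρ := P.sigmaDeriv_of_mem (P.timeChange_symm_mem_Icc_iff.2 hs)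
  rw [norm_smul, Real.norm_of_nonneg (P.rate_nonneg s), ← mul_one_add, rate, hρ,
    inv_mul_cancel₀ (by rw [← hρ]; exact (one_pos.trans_le (P.one_le_sigmaDeriv _)).ne')]

theorem norm_rate_smul_le_one {s : ℝ} (hs : s ∈ Icc 0 (P.timeChange P.t2)) :
    ‖P.rate s • P.u' (τ s)‖ ≤ 1 := by
  linarith [P.rate_add_norm_rate_smul hs, P.rate_nonneg s]

section Reparametrization

variable {E : Type*} [NormedAddCommGroup E] [NormedSpace ℝ E]

theorem intervalIntegrable_rate_smul {w' : ℝ → E} (hw' : IntervalIntegrable w' volume P.t1 P.t2) :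
    IntervalIntegrable (fun s => P.rate s • w' (τ s)) volume 0 (P.timeChange P.t2) :=
  intervalIntegrable_comp_primitiveOrderIso_symm P.ht.le hw'

theorem comp_timeChange_symm_eq_add_integral {w w' : ℝ → E}
    (hw' : IntervalIntegrable w' volume P.t1 P.t2)
    (hw : ∀ t ∈ Icc P.t1 P.t2, w t = w P.t1 + ∫ q in P.t1..t, w' q)
    {s : ℝ} (hs : s ∈ Icc 0 (P.timeChange P.t2)) :
    w (τ s) = w (τ 0) + ∫ r in 0..s, P.rate r • w' (τ r) := by
  rw [P.timeChange_symm_zero]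
  exact comp_primitiveOrderIso_symm_eq_add_integral hw' hw hs

end Reparametrization

theorem intervalIntegrable_rate : IntervalIntegrable P.rate volume 0 (P.timeChange P.t2) := by
  simpa using P.intervalIntegrable_rate_smul (w' := fun _ => (1 : ℝ)) intervalIntegrable_const

theorem timeChange_symm_eq_add_integral {s : ℝ} (hs : s ∈ Icc 0 (P.timeChange P.t2)) :
    τ s = τ 0 + ∫ r in 0..s, P.rate r := by
  simpa using P.comp_timeChange_symm_eq_add_integral (w := id) (w' := fun _ => (1 : ℝ))
    intervalIntegrable_const (fun t _ => by simp) hs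

theorem ae_rate_smul_mem (hC : ∀ c : ℝ, 0 ≤ c → ∀ w ∈ C, c • w ∈ C) :
    ∀ᵐ s, s ∈ Icc 0 (P.timeChange P.t2) → P.rate s • P.u' (τ s) ∈ C := by
  filter_upwards [P.ae_comp_timeChange_symm P.hcone] with s hs hsI
  exact hC _ (P.rate_nonneg s) _ (hs hsI)

theorem ae_rate_smul_v' : ∀ᵐ s, s ∈ Icc 0 (P.timeChange P.t2) →
    P.rate s • P.v' (τ s) = ‖P.rate s • P.u' (τ s)‖ := by
  filter_upwards [P.ae_comp_timeChange_symm P.hvar] with s hs hsI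
  rw [hs hsI, norm_smul, Real.norm_of_nonneg (P.rate_nonneg s), smul_eq_mul]

theorem ae_rate_smul_x' : ∀ᵐ s, s ∈ Icc 0 (P.timeChange P.t2) →
    P.rate s • P.x' (τ s) =
      P.rate s • f (τ s, P.x (τ s)) + ∑ j, (P.rate s • P.u' (τ s)) j • g j (τ s, P.x (τ s)) := by
  filter_upwards [P.ae_comp_timeChange_symm P.hode] with s hs hsI
  simp only [hs hsI, smul_add, Finset.smul_sum, smul_smul, PiLp.smul_apply, smul_eq_mul]

theorem continuousOn_x : ContinuousOn P.x (Icc P.t1 P.t2) := by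
  have hint : IntegrableOn P.x' (uIcc P.t1 P.t2) := by
    rw [uIcc_of_le P.ht.le]
    exact (intervalIntegrable_iff_integrableOn_Icc_of_le P.ht.le).1 P.hx'int
  have hprim := intervalIntegral.continuousOn_primitive_interval hint
  rw [uIcc_of_le P.ht.le] at hprim
  exact (continuousOn_const.add hprim).congr P.hxac

theorem exists_bound_vectorFields (hf : Continuous f) (hg : ∀ j, Continuous (g j)) :
    ∃ M : ℝ, ∀ t ∈ Icc P.t1 P.t2, ‖f (t, P.x t)‖ + ∑ j, ‖g j (t, P.x t)‖ ≤ M := by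
  have hcurve : ContinuousOn (fun t => (t, P.x t)) (Icc P.t1 P.t2) :=
    continuousOn_id.prodMk P.continuousOn_x
  obtain ⟨M, hM⟩ := isCompact_Icc.exists_bound_of_continuousOn
    ((hf.comp_continuousOn hcurve).norm.add
      (continuousOn_finsetSum _ fun j _ => ((hg j).comp_continuousOn hcurve).norm))
  exact ⟨M, fun t ht => (le_abs_self _).trans (hM t ht)⟩

theorem lipschitzOnWith_comp_timeChange_symm (hf : Continuous f) (hg : ∀ j, Continuous (g j)) :
    ∃ L : ℝ≥0, LipschitzOnWith L (fun s => (τ s, P.x (τ s), P.v (τ s), τ s, P.u (τ s)))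
      (Icc 0 (P.timeChange P.t2)) := by
  obtain ⟨M, hM⟩ := P.exists_bound_vectorFields hf hg
  have htime : LipschitzOnWith 1 τ (Icc 0 (P.timeChange P.t2)) :=
    lipschitzWith_primitiveOrderIso_symm.lipschitzOnWith
  have hx : LipschitzOnWith M.toNNReal (fun s => P.x (τ s)) (Icc 0 (P.timeChange P.t2)) := by
    refine lipschitzOnWith_of_eq_add_integral (P.intervalIntegrable_rate_smul P.hx'int) ?_
      fun s hs => P.comp_timeChange_symm_eq_add_integral P.hx'int P.hxac hs
    filter_upwards [P.ae_rate_smul_x'] with s hs hsI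
    rw [hs hsI]
    refine (norm_smul_add_sum_smul_le _ _ _ _).trans ?_
    rw [abs_of_nonneg (P.rate_nonneg s), P.rate_add_norm_rate_smul hsI, one_mul]
    exact (hM _ (P.timeChange_symm_mem_Icc_iff.2 hsI)).trans (Real.le_coe_toNNReal M)
  have hv : LipschitzOnWith 1 (fun s => P.v (τ s)) (Icc 0 (P.timeChange P.t2)) := by
    refine lipschitzOnWith_of_eq_add_integral (P.intervalIntegrable_rate_smul P.hv'int) ?_
      fun s hs => P.comp_timeChange_symm_eq_add_integral P.hv'int P.hvac hs
    filter_upwards [P.ae_rate_smul_v'] with s hs hsI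
    rw [hs hsI, norm_norm, NNReal.coe_one]
    exact P.norm_rate_smul_le_one hsI
  have hu : LipschitzOnWith 1 (fun s => P.u (τ s)) (Icc 0 (P.timeChange P.t2)) :=
    lipschitzOnWith_of_eq_add_integral (P.intervalIntegrable_rate_smul P.hu'int)
      (Eventually.of_forall fun s hsI => by simpa using P.norm_rate_smul_le_one hsI)
      fun s hs => P.comp_timeChange_symm_eq_add_integral P.hu'int P.huac hs
  exact ⟨_, htime.prodMk (hx.prodMk (hv.prodMk (htime.prodMk hu)))⟩

/-- The embedding `ℐ(P)`. -/
def toExtProcess (hC : ∀ c : ℝ, 0 ≤ c → ∀ w ∈ C, c • w ∈ C) (hf : Continuous f)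
    (hg : ∀ j, Continuous (g j)) : ExtProcess n m C f g where
  S := P.timeChange P.t2
  hS := by simpa using P.timeChange.monotone P.ht.le
  y0 := τ
  y s := P.x (τ s)
  nu s := P.v (τ s)
  phi0 := τ
  phi s := P.u (τ s)
  y0' := P.rate
  y' s := P.rate s • P.x' (τ s)
  nu' s := P.rate s • P.v' (τ s)
  phi0' := P.rate
  phi' s := P.rate s • P.u' (τ s)
  lip := P.lipschitzOnWith_comp_timeChange_symm hf hg
  hy0int := P.intervalIntegrable_rate
  hyint := P.intervalIntegrable_rate_smul P.hx'int
  hnuint := P.intervalIntegrable_rate_smul P.hv'int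
  hphi0int := P.intervalIntegrable_rate
  hphiint := P.intervalIntegrable_rate_smul P.hu'int
  hy0ac _ hs := P.timeChange_symm_eq_add_integral hs
  hyac _ hs := P.comp_timeChange_symm_eq_add_integral P.hx'int P.hxac hs
  hnuac _ hs := P.comp_timeChange_symm_eq_add_integral P.hv'int P.hvac hs
  hphi0ac _ hs := P.timeChange_symm_eq_add_integral hs
  hphiac _ hs := P.comp_timeChange_symm_eq_add_integral P.hu'int P.huac hs
  heqy0 := Eventually.of_forall fun _ _ => rfl
  heqy := P.ae_rate_smul_x'
  heqnu := P.ae_rate_smul_v'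
  hcone := by
    filter_upwards [P.ae_rate_smul_mem hC] with s hs hsI
    exact ⟨P.rate_nonneg s, hs hsI, P.rate_add_norm_rate_smul hsI⟩
  hyconstl s hs := by
    rw [P.timeChange_symm_zero]
    exact P.hxconstl _ (P.timeChange_symm_zero ▸ P.timeChange.symm.monotone hs)
  hyconstr s hs := by
    rw [OrderIso.symm_apply_apply]
    exact P.hxconstr _ (by simpa using P.timeChange.symm.monotone hs)
  hnuconstl s hs := by
    rw [P.timeChange_symm_zero]
    exact P.hvconstl _ (P.timeChange_symm_zero ▸ P.timeChange.symm.monotone hs)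
  hnuconstr s hs := by
    rw [OrderIso.symm_apply_apply]
    exact P.hvconstr _ (by simpa using P.timeChange.symm.monotone hs)

theorem isEmbedding_toExtProcess (hC : ∀ c : ℝ, 0 ≤ c → ∀ w ∈ C, c • w ∈ C)
    (hf : Continuous f) (hg : ∀ j, Continuous (g j)) :
    IsEmbedding P (P.toExtProcess hC hf hg) := by
  refine ⟨P.timeChange_eq_sigmaMap ⟨P.ht.le, le_rfl⟩, fun t ht => ?_⟩
  simp [toExtProcess, ← P.timeChange_eq_sigmaMap ht]

end StrictProcess

namespace IsEmbedding

variable {P : StrictProcess n m C f g} {Q : ExtProcess n m C f g}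

theorem endpoints (hPQ : IsEmbedding P Q) :
    Q.y0 0 = P.t1 ∧ Q.y 0 = P.x P.t1 ∧ Q.nu 0 = P.v P.t1 ∧
      Q.y0 Q.S = P.t2 ∧ Q.y Q.S = P.x P.t2 ∧ Q.nu Q.S = P.v P.t2 := by
  have h1 := hPQ.2 P.t1 ⟨le_rfl, P.ht.le⟩
  have h2 := hPQ.2 P.t2 ⟨P.ht.le, le_rfl⟩
  rw [show sigmaMap P P.t1 = 0 by simp [sigmaMap]] at h1
  rw [← hPQ.1] at h2
  exact ⟨h1.1, h1.2.1, h1.2.2.1, h2.1, h2.2.1, h2.2.2.1⟩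

theorem extFeasible_iff (hPQ : IsEmbedding P Q) {K : EReal} {T : Set (ℝ × En n × ℝ × En n)} :
    ExtFeasible K T Q ↔ StrictFeasible K T P := by
  obtain ⟨h1, h2, h3, h4, h5, h6⟩ := hPQ.endpoints
  simp only [ExtFeasible, StrictFeasible, h1, h2, h3, h4, h5, h6]

theorem jext_eq (hPQ : IsEmbedding P Q) (h : ℝ × En n × ℝ × En n × ℝ → ℝ) :
    Jext h Q = Jstrict h P := by
  obtain ⟨h1, h2, -, h4, h5, h6⟩ := hPQ.endpoints
  simp only [Jext, Jstrict, endptExt, h1, h2, h4, h5, h6]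

end IsEmbedding

namespace ExtProcess

variable (Q : ExtProcess n m C f g)

theorem exists_bound : ∃ M : ℝ, ∀ t, ‖Q.y t‖ + |Q.nu t| ≤ M := by
  obtain ⟨L, hL⟩ := Q.lip
  have hy : ContinuousOn Q.y (Icc 0 Q.S) := continuous_snd.fst.comp_continuousOn hL.continuousOn
  have hnu : ContinuousOn Q.nu (Icc 0 Q.S) :=
    continuous_snd.snd.fst.comp_continuousOn hL.continuousOn
  obtain ⟨M, hM⟩ := isCompact_Icc.exists_bound_of_continuousOn (hy.norm.add hnu.abs)
  have hbound : ∀ t ∈ Icc 0 Q.S, ‖Q.y t‖ + |Q.nu t| ≤ M := fun t ht =>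
    (le_abs_self _).trans (hM t ht)
  refine ⟨M, fun t => ?_⟩
  rcases le_total t 0 with h | h
  · rw [Q.hyconstl t h, Q.hnuconstl t h]; exact hbound 0 ⟨le_rfl, Q.hS⟩
  rcases le_total Q.S t with h' | h'
  · rw [Q.hyconstr t h', Q.hnuconstr t h']; exact hbound Q.S ⟨Q.hS, le_rfl⟩
  · exact hbound t ⟨h, h'⟩

end ExtProcess

theorem bddAbove_range_sqrt_dist (Q Qb : ExtProcess n m C f g) :
    BddAbove (range fun t => Real.sqrt (‖Q.y t - Qb.y t‖ ^ 2 + (Q.nu t - Qb.nu t) ^ 2)) := by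
  obtain ⟨M, hM⟩ := Q.exists_bound
  obtain ⟨Mb, hMb⟩ := Qb.exists_bound
  refine ⟨M + Mb, forall_mem_range.2 fun t => ?_⟩
  have hy := norm_sub_le (Q.y t) (Qb.y t)
  have hnu := abs_sub (Q.nu t) (Qb.nu t)
  have hsqrt : Real.sqrt (‖Q.y t - Qb.y t‖ ^ 2 + (Q.nu t - Qb.nu t) ^ 2) ≤
      ‖Q.y t - Qb.y t‖ + |Q.nu t - Qb.nu t| := by
    rw [Real.sqrt_le_left (by positivity), add_sq, sq_abs]
    nlinarith [norm_nonneg (Q.y t - Qb.y t), abs_nonneg (Q.nu t - Qb.nu t)]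
  linarith [hM t, hMb t]

theorem dist_le_dExt (Q Qb : ExtProcess n m C f g) (t : ℝ) :
    dist (Q.y t) (Qb.y t) ≤ dExt Q Qb ∧ dist (Q.nu t) (Qb.nu t) ≤ dExt Q Qb := by
  have hsup := le_ciSup (bddAbove_range_sqrt_dist Q Qb) t
  have hdExt : dExt Q Qb = |Q.y0 0 - Qb.y0 0| + |Q.y0 Q.S - Qb.y0 Qb.S| +
      ⨆ t, Real.sqrt (‖Q.y t - Qb.y t‖ ^ 2 + (Q.nu t - Qb.nu t) ^ 2) := rfl
  have hy : dist (Q.y t) (Qb.y t) ≤ Real.sqrt (‖Q.y t - Qb.y t‖ ^ 2 + (Q.nu t - Qb.nu t) ^ 2) :=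
    Real.le_sqrt_of_sq_le (by rw [dist_eq_norm]; nlinarith [sq_nonneg (Q.nu t - Qb.nu t)])
  have hnu : dist (Q.nu t) (Qb.nu t) ≤ Real.sqrt (‖Q.y t - Qb.y t‖ ^ 2 + (Q.nu t - Qb.nu t) ^ 2) :=
    Real.le_sqrt_of_sq_le (by rw [Real.dist_eq, sq_abs]; nlinarith [sq_nonneg ‖Q.y t - Qb.y t‖])
  constructor <;> linarith [abs_nonneg (Q.y0 0 - Qb.y0 0), abs_nonneg (Q.y0 Q.S - Qb.y0 Qb.S)]

theorem dist_endptExt_le_dExt (Q Qb : ExtProcess n m C f g) :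
    dist (endptExt Q) (endptExt Qb) ≤ dExt Q Qb := by
  have hsup : 0 ≤ ⨆ t, Real.sqrt (‖Q.y t - Qb.y t‖ ^ 2 + (Q.nu t - Qb.nu t) ^ 2) :=
    Real.iSup_nonneg fun t => Real.sqrt_nonneg _
  have hdExt : dExt Q Qb = |Q.y0 0 - Qb.y0 0| + |Q.y0 Q.S - Qb.y0 Qb.S| +
      ⨆ t, Real.sqrt (‖Q.y t - Qb.y t‖ ^ 2 + (Q.nu t - Qb.nu t) ^ 2) := rfl
  -- beyond both horizons the states are frozen at their final values
  set t := max Q.S Qb.S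
  have hend := dist_le_dExt Q Qb t
  rw [Q.hyconstr t (le_max_left _ _), Qb.hyconstr t (le_max_right _ _),
    Q.hnuconstr t (le_max_left _ _), Qb.hnuconstr t (le_max_right _ _)] at hend
  simp only [endptExt, Prod.dist_eq, Real.dist_eq]
  refine max_le ?_ (max_le (dist_le_dExt Q Qb 0).1 (max_le ?_ (max_le hend.1 ?_)))
  · linarith [abs_nonneg (Q.y0 Q.S - Qb.y0 Qb.S)]
  · linarith [abs_nonneg (Q.y0 0 - Qb.y0 0)]
  · simpa only [Real.dist_eq] using hend.2

theorem le_jstrict_of_extGlobalMin (hC : ∀ c : ℝ, 0 ≤ c → ∀ w ∈ C, c • w ∈ C)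
    (hf : Continuous f) (hg : ∀ j, Continuous (g j)) {K : EReal}
    {T : Set (ℝ × En n × ℝ × En n)} {h : ℝ × En n × ℝ × En n × ℝ → ℝ}
    {Qbar : ExtProcess n m C f g} (hmin : ExtGlobalMin K T h Qbar)
    {P : StrictProcess n m C f g} (hP : StrictFeasible K T P) :
    Jext h Qbar ≤ Jstrict h P := by
  have hPQ := P.isEmbedding_toExtProcess hC hf hg
  rw [← hPQ.jext_eq h]
  exact hmin.2 _ (hPQ.extFeasible_iff.2 hP)

theorem exists_jstrict_lt_of_not_isolated {K : EReal} {T : Set (ℝ × En n × ℝ × En n)}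
    {h : ℝ × En n × ℝ × En n × ℝ → ℝ} {Qbar : ExtProcess n m C f g}
    (hh : ContinuousAt h (endptExt Qbar)) (hniso : ¬ IsolatedProcess K T Qbar)
    {ε : ℝ} (hε : 0 < ε) :
    ∃ P : StrictProcess n m C f g, StrictFeasible K T P ∧ Jstrict h P < Jext h Qbar + ε := by
  obtain ⟨δ, hδ, hball⟩ := Metric.continuousAt_iff.1 hh ε hε
  obtain ⟨P, Q, hPQ, hQ, hd⟩ := not_not.1 fun hfar => hniso ⟨δ, hδ, hfar⟩
  have hJ := hball ((dist_endptExt_le_dExt Q Qbar).trans_lt hd)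
  rw [Real.dist_eq] at hJ
  refine ⟨P, hPQ.extFeasible_iff.1 hQ, ?_⟩
  rw [← hPQ.jext_eq h]
  exact sub_lt_iff_lt_add'.1 (abs_lt.1 hJ).2

theorem no_infimum_gap_of_not_isolated_minimizer_general
    {n m : ℕ} (C : Set (En m)) (K : EReal) (T : Set (ℝ × En n × ℝ × En n))
    (f : ℝ × En n → En n) (g : Fin m → ℝ × En n → En n)
    (h : ℝ × En n × ℝ × En n × ℝ → ℝ)
    (hC : IsClosedConvexCone C)
    (hH1 : HypH1 f g h)
    (Qbar : ExtProcess n m C f g)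
    (hmin : ExtGlobalMin K T h Qbar)
    (hniso : ¬ IsolatedProcess K T Qbar) :
    NoInfGap C f g K T h := by
  obtain ⟨⟨hf, hg, -⟩, hh, -⟩ := hH1
  have happrox := fun ε (hε : 0 < ε) =>
    exists_jstrict_lt_of_not_isolated hh.continuous.continuousAt hniso hε
  have hext : IsLeast {c | ∃ Q : ExtProcess n m C f g, ExtFeasible K T Q ∧ Jext h Q = c}
      (Jext h Qbar) :=
    ⟨⟨Qbar, hmin.1, rfl⟩, by rintro _ ⟨Q, hQ, rfl⟩; exact hmin.2 Q hQ⟩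
  rw [NoInfGap, hext.csInf_eq]
  refine (csInf_eq_of_forall_ge_of_forall_gt_exists_lt ?_ ?_ ?_).symm
  · obtain ⟨P, hP, -⟩ := happrox 1 one_pos
    exact ⟨_, P, hP, rfl⟩
  · rintro _ ⟨P, hP, rfl⟩
    exact le_jstrict_of_extGlobalMin hC.2.2 hf.continuous (fun j => (hg j).continuous) hmin hP
  · intro c hc
    obtain ⟨P, hP, hlt⟩ := happrox (c - Jext h Qbar) (sub_pos.2 hc)
    exact ⟨_, ⟨P, hP, rfl⟩, by linarith⟩

/-- Under hypothesis (H1), if there exists an extended sense `L^∞`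
(global) minimizer for `(P_e)` which is not isolated, then there is no infimum gap. -/
theorem no_infimum_gap_of_not_isolated_minimizer
    {n m : ℕ} (C : Set (En m)) (K : EReal) (T : Set (ℝ × En n × ℝ × En n))
    (f : ℝ × En n → En n) (g : Fin m → ℝ × En n → En n)
    (h : ℝ × En n × ℝ × En n × ℝ → ℝ)
    (hC : IsClosedConvexCone C) (hT : IsClosed T) (hK : (0 : EReal) < K)
    (hH1 : HypH1 f g h)
    (Qbar : ExtProcess n m C f g)
    (hmin : ExtGlobalMin K T h Qbar)
    (hniso : ¬ IsolatedProcess K T Qbar) :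
    NoInfGap C f g K T h :=
  no_infimum_gap_of_not_isolated_minimizer_general C K T f g h hC hH1 Qbar hmin hniso
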